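/- arXiv:2503.20393 — 4 statements merged into one kernel-verified Lean document; each statement's English description precedes it below -/
import Mathlib

section
/- Let X* be an independent copy of X. Then ∫_{ℝ^p×ℝ^p} ( Ψ(κ(x₁), κ(x₂)) − Ψ(κ(x₂), κ(x₁)) )² d(μ_X ⊗ μ_X)(x₁, x₂) ≤ 1 − P(X = X*), and equality holds if and only if Y is completely separated relative to X. -/
/-!
For independent `Z ~ μ` and `W ~ ν` one has `Ψ(μ, ν) = (P(Z < W) + P(Z ≤ W)) / 2`, so Fubini
and `P(Z < W) + P(W ≤ Z) = 1` give `Ψ(μ, ν) + Ψ(ν, μ) = 1`. The integrand is therefore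
`(2 Ψ(κ x₁, κ x₂) - 1)² ≤ 1`, with equality exactly when `Ψ(κ x₁, κ x₂) ∈ {0, 1}`, and it
vanishes on the diagonal. So the integral is at most the `μ_X ⊗ μ_X`-mass of the
off-diagonal set, which is `1 - P(X = X*)`, with equality iff the integrand is `1` a.e. off
the diagonal.
-/

open MeasureTheory ProbabilityTheory Set Filter Topology

/-- The (nonparametric) relative effect `Ψ(μ, ν) = ∫ μ((-∞,y)) + (1/2) μ({y}) dν(y)`. -/
noncomputable def relEffect (μ ν : Measure ℝ) : ℝ :=
  ∫ y, ((μ (Set.Iio y)).toReal + (1 / 2) * (μ {y}).toReal) ∂ν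

/-- `α(μ) = 1 - ∫ μ({x}) dμ(x) = 1 - P(X = X*)`, the non-discrete mass of `μ`. -/
noncomputable def alphaCoeff {E : Type*} [MeasurableSpace E] (μ : Measure E) : ℝ :=
  1 - ∫ x, (μ {x}).toReal ∂μ

/-- A random variable is non-degenerate if it is not a.s. constant. -/
def Nondegenerate {Ω α : Type*} [MeasurableSpace Ω] (P : Measure Ω) (Z : Ω → α) : Prop :=
  ¬ ∃ c, ∀ᵐ ω ∂P, Z ω = c

/-- `Y` is completely separated relative to `X`. -/
def CompletelySeparated {Ω E : Type*} [MeasurableSpace Ω] [MeasurableSpace E]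
    (P : Measure Ω) [IsFiniteMeasure P] (Y : Ω → ℝ) (X : Ω → E) : Prop :=
  ∀ᵐ x : E × E ∂((P.map X).prod (P.map X)), x.1 ≠ x.2 →
    relEffect (condDistrib Y X P x.1) (condDistrib Y X P x.2) = 0 ∨
    relEffect (condDistrib Y X P x.1) (condDistrib Y X P x.2) = 1

theorem integral_measureReal_prodMk_preimage {α β : Type*} [MeasurableSpace α]
    [MeasurableSpace β] (μ : Measure α) (ν : Measure β) [SFinite μ] [IsFiniteMeasure ν]
    {s : Set (α × β)} (hs : MeasurableSet s) :
    ∫ x, ν.real (Prod.mk x ⁻¹' s) ∂μ = (μ.prod ν).real s := by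
  rw [measureReal_def, Measure.prod_apply hs, ← integral_toReal
    (measurable_measure_prodMk_left hs).aemeasurable (ae_of_all _ fun _ => measure_lt_top _ _)]
  rfl

theorem integral_measureReal_prodMk_swap_preimage {α β : Type*} [MeasurableSpace α]
    [MeasurableSpace β] (μ : Measure α) (ν : Measure β) [IsFiniteMeasure μ] [SFinite ν]
    {s : Set (α × β)} (hs : MeasurableSet s) :
    ∫ y, μ.real ((fun x => (x, y)) ⁻¹' s) ∂ν = (μ.prod ν).real s := by
  rw [measureReal_def, Measure.prod_apply_symm hs, ← integral_toReal
    (measurable_measure_prodMk_right hs).aemeasurable (ae_of_all _ fun _ => measure_lt_top _ _)]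
  rfl

theorem integrable_measureReal_of_monotone {μ ν : Measure ℝ} [IsFiniteMeasure μ]
    [IsFiniteMeasure ν] {s : ℝ → Set ℝ} (hs : Monotone s) :
    Integrable (fun y => μ.real (s y)) ν :=
  (integrable_const (μ.real univ)).mono'
    (show Monotone fun y => μ.real (s y) from
      fun _ _ hab => measureReal_mono (hs hab)).measurable.aestronglyMeasurable
    (ae_of_all _ fun _ => by
      rw [Real.norm_of_nonneg measureReal_nonneg]
      exact measureReal_mono (subset_univ _))

theorem integral_measureReal_Iio_add_integral_measureReal_Iic (μ ν : Measure ℝ)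
    [IsProbabilityMeasure μ] [IsProbabilityMeasure ν] :
    ∫ y, μ.real (Iio y) ∂ν + ∫ x, ν.real (Iic x) ∂μ = 1 := by
  have hlt : MeasurableSet {p : ℝ × ℝ | p.2 < p.1} :=
    measurableSet_lt measurable_snd measurable_fst
  have hIio : ∫ y, μ.real (Iio y) ∂ν = (ν.prod μ).real {p | p.2 < p.1} :=
    integral_measureReal_prodMk_preimage ν μ hlt
  have hle : {p : ℝ × ℝ | p.1 ≤ p.2} = {p | p.2 < p.1}ᶜ := by ext; simp
  have hIic : ∫ x, ν.real (Iic x) ∂μ = (ν.prod μ).real {p | p.1 ≤ p.2} :=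
    integral_measureReal_prodMk_swap_preimage ν μ (measurableSet_le measurable_fst measurable_snd)
  rw [hIio, hIic, hle, probReal_compl_eq_one_sub hlt]
  ring

theorem relEffect_eq_average (μ ν : Measure ℝ) [IsFiniteMeasure μ] [IsFiniteMeasure ν] :
    relEffect μ ν = (∫ y, μ.real (Iio y) ∂ν + ∫ y, μ.real (Iic y) ∂ν) / 2 := by
  rw [← integral_add (integrable_measureReal_of_monotone fun _ _ => Iio_subset_Iio)
    (integrable_measureReal_of_monotone fun _ _ => Iic_subset_Iic.2), ← integral_div, relEffect]
  refine integral_congr_ae (ae_of_all _ fun y => ?_)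
  have hIic : μ.real (Iic y) = μ.real (Iio y) + μ.real {y} := by
    rw [← Iio_union_right, measureReal_union (by simp) (measurableSet_singleton y)]
  simp only [← measureReal_def, hIic]
  ring

theorem relEffect_add_relEffect_swap (μ ν : Measure ℝ) [IsProbabilityMeasure μ]
    [IsProbabilityMeasure ν] : relEffect μ ν + relEffect ν μ = 1 := by
  rw [relEffect_eq_average, relEffect_eq_average]
  linarith [integral_measureReal_Iio_add_integral_measureReal_Iic μ ν,
    integral_measureReal_Iio_add_integral_measureReal_Iic ν μ]

theorem relEffect_nonneg (μ ν : Measure ℝ) : 0 ≤ relEffect μ ν :=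
  integral_nonneg fun _ => by positivity

theorem sq_relEffect_sub_relEffect_le_one (μ ν : Measure ℝ) [IsProbabilityMeasure μ]
    [IsProbabilityMeasure ν] : (relEffect μ ν - relEffect ν μ) ^ 2 ≤ 1 := by
  nlinarith [relEffect_add_relEffect_swap μ ν, relEffect_nonneg μ ν, relEffect_nonneg ν μ]

theorem sq_relEffect_sub_relEffect_eq_one_iff (μ ν : Measure ℝ) [IsProbabilityMeasure μ]
    [IsProbabilityMeasure ν] :
    (relEffect μ ν - relEffect ν μ) ^ 2 = 1 ↔ relEffect μ ν = 0 ∨ relEffect μ ν = 1 := by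
  rw [eq_sub_of_add_eq' (relEffect_add_relEffect_swap μ ν), sq, mul_self_eq_one_iff]
  grind

theorem measurable_relEffect {α : Type*} [MeasurableSpace α] (κ η : Kernel α ℝ)
    [IsSFiniteKernel κ] [IsSFiniteKernel η] :
    Measurable fun a => relEffect (κ a) (η a) := by
  have hIio : Measurable fun q : α × ℝ => (κ q.1 (Iio q.2)).toReal :=
    (Kernel.measurable_kernel_prodMk_left (κ := κ.prodMkRight ℝ)
      (measurableSet_lt measurable_snd measurable_fst.snd)).ennreal_toReal
  have hsingleton : Measurable fun q : α × ℝ => (κ q.1 {q.2}).toReal :=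
    (Kernel.measurable_kernel_prodMk_left (κ := κ.prodMkRight ℝ)
      (measurableSet_eq_fun measurable_snd measurable_fst.snd)).ennreal_toReal
  exact ((hIio.add (hsingleton.const_mul _)).stronglyMeasurable.integral_kernel_prod_right'
    (κ := η)).measurable

section OffDiagonal

variable {E : Type*} [MeasurableSpace E]

theorem alphaCoeff_eq_measureReal_compl_diagonal [MeasurableEq E] (μ : Measure E)
    [IsProbabilityMeasure μ] : alphaCoeff μ = (μ.prod μ).real (diagonal E)ᶜ := by
  have hsingleton (x : E) : ({x} : Set E) = Prod.mk x ⁻¹' diagonal E := by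
    ext; simp [eq_comm]
  simp_rw [alphaCoeff, ← measureReal_def, hsingleton,
    integral_measureReal_prodMk_preimage μ μ measurableSet_diagonal,
    probReal_compl_eq_one_sub measurableSet_diagonal]

variable (κ : Kernel E ℝ) [IsMarkovKernel κ]

theorem sq_relEffect_sub_le_indicator_compl_diagonal (x : E × E) :
    (relEffect (κ x.1) (κ x.2) - relEffect (κ x.2) (κ x.1)) ^ 2
      ≤ (diagonal E)ᶜ.indicator 1 x := by
  by_cases hx : x.1 = x.2
  · simp [hx]
  · simpa [hx] using sq_relEffect_sub_relEffect_le_one (κ x.1) (κ x.2)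

theorem integrable_sq_relEffect_sub (ρ : Measure (E × E)) [IsFiniteMeasure ρ] :
    Integrable (fun x : E × E =>
      (relEffect (κ x.1) (κ x.2) - relEffect (κ x.2) (κ x.1)) ^ 2) ρ := by
  have hmeas : Measurable fun x : E × E => relEffect (κ x.1) (κ x.2) :=
    measurable_relEffect (κ.prodMkRight E) (κ.prodMkLeft E)
  refine (integrable_const (1 : ℝ)).mono'
    ((hmeas.sub (hmeas.comp measurable_swap)).pow_const 2).aestronglyMeasurable
    (ae_of_all _ fun x => ?_)
  rw [Real.norm_of_nonneg (sq_nonneg _)]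
  exact sq_relEffect_sub_relEffect_le_one (κ x.1) (κ x.2)

variable [MeasurableEq E] (μ : Measure E) [IsProbabilityMeasure μ]

theorem integral_sq_relEffect_sub_le_alphaCoeff :
    ∫ x : E × E, (relEffect (κ x.1) (κ x.2) - relEffect (κ x.2) (κ x.1)) ^ 2 ∂(μ.prod μ)
      ≤ alphaCoeff μ := by
  rw [alphaCoeff_eq_measureReal_compl_diagonal,
    ← integral_indicator_one measurableSet_diagonal.compl]
  exact integral_mono (integrable_sq_relEffect_sub κ _)
    ((integrable_const 1).indicator measurableSet_diagonal.compl)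
    (sq_relEffect_sub_le_indicator_compl_diagonal κ)

theorem integral_sq_relEffect_sub_eq_alphaCoeff_iff :
    ∫ x : E × E, (relEffect (κ x.1) (κ x.2) - relEffect (κ x.2) (κ x.1)) ^ 2 ∂(μ.prod μ)
        = alphaCoeff μ ↔
      ∀ᵐ x : E × E ∂(μ.prod μ), x.1 ≠ x.2 →
        relEffect (κ x.1) (κ x.2) = 0 ∨ relEffect (κ x.1) (κ x.2) = 1 := by
  rw [alphaCoeff_eq_measureReal_compl_diagonal,
    ← integral_indicator_one measurableSet_diagonal.compl,
    integral_eq_iff_of_ae_le (integrable_sq_relEffect_sub κ _)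
      ((integrable_const 1).indicator measurableSet_diagonal.compl)
      (ae_of_all _ (sq_relEffect_sub_le_indicator_compl_diagonal κ))]
  refine eventually_congr (ae_of_all _ fun x => ?_)
  by_cases hx : x.1 = x.2
  · simp [hx]
  · rw [indicator_of_mem (show x ∈ (diagonal E)ᶜ from hx), Pi.one_apply,
      sq_relEffect_sub_relEffect_eq_one_iff]
    exact ⟨fun h _ => h, fun h => h hx⟩

end OffDiagonal

theorem integral_sq_relEffect_le_alpha_iff_completelySeparated_general
    {Ω : Type*} [MeasurableSpace Ω] {p : ℕ}
    (P : Measure Ω) [IsProbabilityMeasure P]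
    (X : Ω → (Fin p → ℝ)) (Y : Ω → ℝ)
    (hX : Measurable X) :
    (∫ x : (Fin p → ℝ) × (Fin p → ℝ),
        (relEffect (condDistrib Y X P x.1) (condDistrib Y X P x.2)
          - relEffect (condDistrib Y X P x.2) (condDistrib Y X P x.1)) ^ 2
        ∂((P.map X).prod (P.map X))) ≤ alphaCoeff (P.map X)
    ∧ ((∫ x : (Fin p → ℝ) × (Fin p → ℝ),
        (relEffect (condDistrib Y X P x.1) (condDistrib Y X P x.2)
          - relEffect (condDistrib Y X P x.2) (condDistrib Y X P x.1)) ^ 2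
        ∂((P.map X).prod (P.map X))) = alphaCoeff (P.map X)
      ↔ CompletelySeparated P Y X) := by
  have : IsProbabilityMeasure (P.map X) := Measure.isProbabilityMeasure_map hX.aemeasurable
  exact ⟨integral_sq_relEffect_sub_le_alphaCoeff _ _,
    integral_sq_relEffect_sub_eq_alphaCoeff_iff _ _⟩

/-- Lemma: the squared antisymmetrized relative effect integral is at most `1 - P(X = X*)`,
with equality iff `Y` is completely separated relative to `X`. -/
theorem integral_sq_relEffect_le_alpha_iff_completelySeparated
    {Ω : Type*} [MeasurableSpace Ω] {p : ℕ} (hp : 1 ≤ p)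
    (P : Measure Ω) [IsProbabilityMeasure P]
    (X : Ω → (Fin p → ℝ)) (Y : Ω → ℝ)
    (hX : Measurable X) (hY : Measurable Y)
    (hXnd : ∃ k, Nondegenerate P fun ω => X ω k)
    (hYnd : Nondegenerate P Y) :
    (∫ x : (Fin p → ℝ) × (Fin p → ℝ),
        (relEffect (condDistrib Y X P x.1) (condDistrib Y X P x.2)
          - relEffect (condDistrib Y X P x.2) (condDistrib Y X P x.1)) ^ 2
        ∂((P.map X).prod (P.map X))) ≤ alphaCoeff (P.map X)
    ∧ ((∫ x : (Fin p → ℝ) × (Fin p → ℝ),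
        (relEffect (condDistrib Y X P x.1) (condDistrib Y X P x.2)
          - relEffect (condDistrib Y X P x.2) (condDistrib Y X P x.1)) ^ 2
        ∂((P.map X).prod (P.map X))) = alphaCoeff (P.map X)
      ↔ CompletelySeparated P Y X) :=
  integral_sq_relEffect_le_alpha_iff_completelySeparated_general P X Y hX
end

section
/- Suppose some coordinate X_k of X has continuous cdf (equivalently, the law of X_k is atomless). If Y is completely separated relative to X, then Y perfectly depends on X, i.e. there exists a Borel measurable function f : ℝ^p → ℝ with Y = f(X) almost surely, and moreover the cdf of Y is continuous (the law of Y is atomless). -/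
/-!
Write `κ` for the conditional law of `Y` given `X` and `μ` for the law of `X`. A relative
effect `Ψ(κ x₁, κ x₂) = 0` forces `κ x₁` to lie almost surely strictly below `κ x₂`, and
`Ψ = 1` strictly above. As the law of `X k` is atomless, the diagonal is `μ ⊗ μ`-null, so almost
every pair is separated and every set of positive `μ`-measure contains a separated pair. The set
of `x` for which `κ x` has an atom at a given `y`, and the set of `x` for which `κ x` charges both
`(-∞, q]` and `(q, ∞)` for a given `q`, contain no separated pair, so they are null. The first
gives that the law `κ ∘ μ` of `Y` is atomless. The second makes almost every `κ x` a zero-one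
measure on the rational half-lines, hence on all Borel sets (Dynkin), hence a Dirac mass
`δ (f x)`; taking `f x = ∫ y ∂(κ x)` makes `f` measurable, and `Y = f X` almost surely.
-/

open MeasureTheory ProbabilityTheory Set Filter Topology

noncomputable def midCDF (ρ : Measure ℝ) (t : ℝ) : ℝ :=
  (ρ.real (Iio t) + ρ.real (Iic t)) / 2

lemma relEffect_eq_integral_midCDF (ρ σ : Measure ℝ) [IsFiniteMeasure ρ] :
    relEffect ρ σ = ∫ t, midCDF ρ t ∂σ := by
  refine integral_congr_ae (ae_of_all _ fun t ↦ ?_)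
  have h : ρ.real (Iic t) = ρ.real (Iio t) + ρ.real {t} := by
    rw [← Iio_union_right, measureReal_union (by simp) (measurableSet_singleton t)]
  simp only [midCDF, h, measureReal_def]
  ring

lemma midCDF_nonneg (ρ : Measure ℝ) (t : ℝ) : 0 ≤ midCDF ρ t := by
  unfold midCDF; positivity

lemma midCDF_le_one (ρ : Measure ℝ) [IsProbabilityMeasure ρ] (t : ℝ) : midCDF ρ t ≤ 1 := by
  unfold midCDF
  linarith [measureReal_le_one (μ := ρ) (s := Iio t), measureReal_le_one (μ := ρ) (s := Iic t)]

lemma measurable_midCDF (ρ : Measure ℝ) [IsFiniteMeasure ρ] : Measurable (midCDF ρ) := by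
  have hIio : Monotone fun t ↦ ρ.real (Iio t) :=
    fun _ _ h ↦ measureReal_mono (Iio_subset_Iio h)
  have hIic : Monotone fun t ↦ ρ.real (Iic t) :=
    fun _ _ h ↦ measureReal_mono (Iic_subset_Iic.2 h)
  exact (hIio.measurable.add hIic.measurable).div_const 2

lemma measure_Iic_eq_zero_of_midCDF_eq_zero {ρ : Measure ℝ} [IsFiniteMeasure ρ] {t : ℝ}
    (h : midCDF ρ t = 0) : ρ (Iic t) = 0 := by
  rw [← measureReal_eq_zero_iff]
  unfold midCDF at h
  linarith [measureReal_mono (μ := ρ) (Iio_subset_Iic_self (a := t)),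
    measureReal_nonneg (μ := ρ) (s := Iio t)]

lemma measure_Ici_eq_zero_of_midCDF_eq_one {ρ : Measure ℝ} [IsProbabilityMeasure ρ] {t : ℝ}
    (h : midCDF ρ t = 1) : ρ (Ici t) = 0 := by
  have hIio : ρ.real (Iio t) = 1 := by
    unfold midCDF at h
    linarith [measureReal_le_one (μ := ρ) (s := Iio t),
      measureReal_le_one (μ := ρ) (s := Iic t)]
  rw [← compl_Iio, prob_compl_eq_zero_iff measurableSet_Iio, ← ENNReal.toReal_eq_one_iff]
  exact hIio

lemma integrable_midCDF (ρ σ : Measure ℝ) [IsProbabilityMeasure ρ] [IsFiniteMeasure σ] :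
    Integrable (midCDF ρ) σ :=
  .of_bound (measurable_midCDF ρ).aestronglyMeasurable 1 (ae_of_all _ fun t ↦ by
    rw [Real.norm_of_nonneg (midCDF_nonneg ρ t)]; exact midCDF_le_one ρ t)

lemma ae_measure_Iic_eq_zero_of_relEffect_eq_zero {ρ σ : Measure ℝ} [IsProbabilityMeasure ρ]
    [IsFiniteMeasure σ] (h : relEffect ρ σ = 0) : ∀ᵐ t ∂σ, ρ (Iic t) = 0 := by
  rw [relEffect_eq_integral_midCDF,
    integral_eq_zero_iff_of_nonneg (midCDF_nonneg ρ) (integrable_midCDF ρ σ)] at h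
  filter_upwards [h] with t ht using measure_Iic_eq_zero_of_midCDF_eq_zero ht

lemma ae_measure_Ici_eq_zero_of_relEffect_eq_one {ρ σ : Measure ℝ} [IsProbabilityMeasure ρ]
    [IsProbabilityMeasure σ] (h : relEffect ρ σ = 1) : ∀ᵐ t ∂σ, ρ (Ici t) = 0 := by
  have hint : Integrable (fun t ↦ 1 - midCDF ρ t) σ :=
    (integrable_const 1).sub (integrable_midCDF ρ σ)
  have hzero : ∫ t, (1 - midCDF ρ t) ∂σ = 0 := by
    rw [integral_sub (integrable_const 1) (integrable_midCDF ρ σ),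
      ← relEffect_eq_integral_midCDF, h]
    simp
  rw [integral_eq_zero_iff_of_nonneg (fun t ↦ sub_nonneg.2 (midCDF_le_one ρ t)) hint] at hzero
  filter_upwards [hzero] with t ht
  exact measure_Ici_eq_zero_of_midCDF_eq_one (sub_eq_zero.1 ht).symm

def IsSeparatedPair (ρ σ : Measure ℝ) : Prop :=
  relEffect ρ σ = 0 ∨ relEffect ρ σ = 1

section IsSeparatedPair

variable {ρ σ : Measure ℝ} [IsProbabilityMeasure ρ] [IsProbabilityMeasure σ]

lemma not_isSeparatedPair_of_measure_singleton_ne_zero {y : ℝ} (hρ : ρ {y} ≠ 0)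
    (hσ : σ {y} ≠ 0) : ¬ IsSeparatedPair ρ σ := by
  rintro (h | h)
  · obtain ⟨t, rfl, ht⟩ := Measure.exists_mem_of_measure_ne_zero_of_ae hσ
      (ae_restrict_of_ae (ae_measure_Iic_eq_zero_of_relEffect_eq_zero h))
    exact hρ (measure_mono_null (by simp) ht)
  · obtain ⟨t, rfl, ht⟩ := Measure.exists_mem_of_measure_ne_zero_of_ae hσ
      (ae_restrict_of_ae (ae_measure_Ici_eq_zero_of_relEffect_eq_one h))
    exact hρ (measure_mono_null (by simp) ht)

lemma not_isSeparatedPair_of_measure_Iic_ne_zero_of_measure_Ioi_ne_zero {q : ℝ}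
    (hρl : ρ (Iic q) ≠ 0) (hρr : ρ (Ioi q) ≠ 0) (hσl : σ (Iic q) ≠ 0)
    (hσr : σ (Ioi q) ≠ 0) : ¬ IsSeparatedPair ρ σ := by
  rintro (h | h)
  · obtain ⟨t, hqt, ht⟩ := Measure.exists_mem_of_measure_ne_zero_of_ae hσr
      (ae_restrict_of_ae (ae_measure_Iic_eq_zero_of_relEffect_eq_zero h))
    exact hρl (measure_mono_null (Iic_subset_Iic.2 (le_of_lt hqt)) ht)
  · obtain ⟨t, htq, ht⟩ := Measure.exists_mem_of_measure_ne_zero_of_ae hσl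
      (ae_restrict_of_ae (ae_measure_Ici_eq_zero_of_relEffect_eq_one h))
    exact hρr (measure_mono_null (Ioi_subset_Ici htq) ht)

end IsSeparatedPair

lemma isZeroOneMeasure_of_isPiSystem {α : Type*} [mα : MeasurableSpace α] {ρ : Measure α}
    [IsProbabilityMeasure ρ] {C : Set (Set α)} (hgen : mα = .generateFrom C) (hC : IsPiSystem C)
    (h : ∀ s ∈ C, ρ s = 0 ∨ ρ s = 1) : IsZeroOneMeasure ρ := by
  refine ⟨fun s hs ↦ ?_⟩
  induction s, hs using MeasurableSpace.induction_on_inter hgen hC with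
  | empty => exact .inl measure_empty
  | basic s hs => exact h s hs
  | compl s hs ih =>
    rw [prob_compl_eq_zero_iff hs, prob_compl_eq_one_iff hs]
    exact ih.symm
  | iUnion f _ _ ih =>
    by_cases hone : ∃ i, ρ (f i) = 1
    · obtain ⟨i, hi⟩ := hone
      exact .inr (le_antisymm prob_le_one (hi ▸ measure_mono (subset_iUnion f i)))
    · push Not at hone
      exact .inl (measure_iUnion_null fun i ↦ (ih i).resolve_right (hone i))

lemma exists_eq_dirac_of_forall_rat_measure_Iic_or_Ioi_eq_zero {ρ : Measure ℝ}
    [IsProbabilityMeasure ρ]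
    (h : ∀ q : ℚ, ρ (Iic q) = 0 ∨ ρ (Ioi q) = 0) : ∃ c, ρ = .dirac c := by
  have : IsZeroOneMeasure ρ := by
    refine isZeroOneMeasure_of_isPiSystem (BorelSpace.measurable_eq.trans
      Real.borel_eq_generateFrom_Iic_rat) Real.isPiSystem_Iic_rat ?_
    simp only [mem_iUnion, mem_singleton_iff]
    rintro _ ⟨q, rfl⟩
    rw [← prob_compl_eq_zero_iff measurableSet_Iic, compl_Iic]
    exact h q
  exact IsZeroOneMeasure.exists_eq_dirac

lemma ae_fst_ne_snd_of_nullSingletonClass_map {E F : Type*} [MeasurableSpace E]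
    [MeasurableSpace F] [MeasurableEq F] {μ : Measure E} [SFinite μ] {g : E → F}
    (hg : Measurable g) [NullSingletonClass (μ.map g)] :
    ∀ᵐ z ∂μ.prod μ, z.1 ≠ z.2 := by
  have hmeas : MeasurableSet {z : E × E | g z.1 = g z.2} :=
    measurableSet_eq_fun (hg.comp measurable_fst) (hg.comp measurable_snd)
  have hnull : μ.prod μ {z : E × E | g z.1 = g z.2} = 0 := by
    rw [Measure.prod_apply hmeas]
    refine lintegral_eq_zero_of_ae_eq_zero (ae_of_all _ fun x ↦ ?_)
    rw [Pi.zero_apply, ← measure_singleton (μ := μ.map g) (g x), Measure.map_apply hg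
      (measurableSet_singleton _)]
    dsimp only
    congr 1
    ext y
    simp [eq_comm]
  filter_upwards [measure_eq_zero_iff_ae_notMem.1 hnull] with z hz hzeq
  exact hz (congrArg g hzeq)

section AEIsSeparatedPair

variable {E : Type*} [MeasurableSpace E] {μ : Measure E} [SFinite μ] {κ : Kernel E ℝ}

lemma measure_eq_zero_of_forall_not_isSeparatedPair
    (hsep : ∀ᵐ z ∂μ.prod μ, IsSeparatedPair (κ z.1) (κ z.2))
    {A : Set E} (hA : ∀ x₁ ∈ A, ∀ x₂ ∈ A, ¬ IsSeparatedPair (κ x₁) (κ x₂)) :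
    μ A = 0 := by
  by_contra hμA
  have hAA : μ.prod μ (A ×ˢ A) ≠ 0 := by
    rw [Measure.prod_prod]; exact mul_ne_zero hμA hμA
  obtain ⟨z, hz, hzsep⟩ :=
    Measure.exists_mem_of_measure_ne_zero_of_ae hAA (ae_restrict_of_ae hsep)
  exact hA z.1 hz.1 z.2 hz.2 hzsep

lemma ae_measure_singleton_eq_zero_of_ae_isSeparatedPair [IsMarkovKernel κ]
    (hsep : ∀ᵐ z ∂μ.prod μ, IsSeparatedPair (κ z.1) (κ z.2))
    (y : ℝ) : ∀ᵐ x ∂μ, κ x {y} = 0 :=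
  ae_iff.2 <| measure_eq_zero_of_forall_not_isSeparatedPair hsep fun _ h₁ _ h₂ ↦
    not_isSeparatedPair_of_measure_singleton_ne_zero h₁ h₂

lemma ae_exists_eq_dirac_of_ae_isSeparatedPair [IsMarkovKernel κ]
    (hsep : ∀ᵐ z ∂μ.prod μ, IsSeparatedPair (κ z.1) (κ z.2)) :
    ∀ᵐ x ∂μ, ∃ c, κ x = .dirac c := by
  have hrat : ∀ᵐ x ∂μ, ∀ q : ℚ, κ x (Iic q) = 0 ∨ κ x (Ioi q) = 0 := by
    refine ae_all_iff.2 fun q ↦ ae_iff.2 <| measure_eq_zero_of_forall_not_isSeparatedPair hsep ?_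
    exact fun _ h₁ _ h₂ ↦ not_isSeparatedPair_of_measure_Iic_ne_zero_of_measure_Ioi_ne_zero
      (not_or.1 h₁).1 (not_or.1 h₁).2 (not_or.1 h₂).1 (not_or.1 h₂).2
  filter_upwards [hrat] with x hx
  exact exists_eq_dirac_of_forall_rat_measure_Iic_or_Ioi_eq_zero hx

lemma nullSingletonClass_comp_of_ae_isSeparatedPair [IsMarkovKernel κ]
    (hsep : ∀ᵐ z ∂μ.prod μ, IsSeparatedPair (κ z.1) (κ z.2)) :
    NullSingletonClass (κ ∘ₘ μ) := by
  refine ⟨fun y ↦ ?_⟩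
  rw [Measure.bind_apply (measurableSet_singleton y) κ.aemeasurable]
  exact lintegral_eq_zero_of_ae_eq_zero
    (ae_measure_singleton_eq_zero_of_ae_isSeparatedPair hsep y)

end AEIsSeparatedPair

lemma exists_measurable_ae_eq_dirac {E : Type*} [MeasurableSpace E] {μ : Measure E}
    {κ : Kernel E ℝ} (h : ∀ᵐ x ∂μ, ∃ c, κ x = .dirac c) :
    ∃ f : E → ℝ, Measurable f ∧ ∀ᵐ x ∂μ, κ x = .dirac (f x) := by
  refine ⟨fun x ↦ ∫ y, y ∂κ x, (stronglyMeasurable_id.integral_kernel).measurable, ?_⟩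
  filter_upwards [h] with x ⟨c, hc⟩
  rw [hc, integral_dirac]

lemma ae_eq_comp_of_condDistrib_eq_dirac {Ω E F : Type*} [MeasurableSpace Ω] [MeasurableSpace E]
    [MeasurableSpace F] [StandardBorelSpace F] [Nonempty F] {P : Measure Ω} [IsFiniteMeasure P]
    {X : Ω → E} {Y : Ω → F} (hX : Measurable X) (hY : Measurable Y) {f : E → F}
    (hf : Measurable f) (h : ∀ᵐ x ∂P.map X, condDistrib Y X P x = .dirac (f x)) :
    Y =ᵐ[P] f ∘ X := by
  have hmeas : MeasurableSet {q : E × F | q.2 = f q.1} :=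
    measurableSet_eq_fun measurable_snd (hf.comp measurable_fst)
  have hgraph : P.map (fun ω ↦ (X ω, Y ω)) {q | q.2 = f q.1}ᶜ = 0 := by
    rw [← compProd_map_condDistrib hY.aemeasurable, Measure.compProd_apply hmeas.compl]
    refine lintegral_eq_zero_of_ae_eq_zero ?_
    filter_upwards [h] with x hx
    simp [hx]
  rw [Measure.map_apply (hX.prodMk hY) hmeas.compl] at hgraph
  exact measure_eq_zero_iff_ae_notMem.1 hgraph |>.mono fun ω hω ↦ not_not.1 hω

theorem completelySeparated_imp_perfectDependence_general
    {Ω : Type*} [MeasurableSpace Ω] {p : ℕ}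
    (P : Measure Ω) [IsProbabilityMeasure P]
    (X : Ω → (Fin p → ℝ)) (Y : Ω → ℝ)
    (hX : Measurable X) (hY : Measurable Y)
    (k : Fin p) (hk : NoAtoms (P.map fun ω => X ω k))
    (hsep : CompletelySeparated P Y X) :
    (∃ f : (Fin p → ℝ) → ℝ, Measurable f ∧ ∀ᵐ ω ∂P, Y ω = f (X ω))
    ∧ NoAtoms (P.map Y) := by
  have : NullSingletonClass ((P.map X).map fun x ↦ x k) := by
    rwa [Measure.map_map (measurable_pi_apply k) hX]
  have hsep' : ∀ᵐ z ∂(P.map X).prod (P.map X),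
      IsSeparatedPair (condDistrib Y X P z.1) (condDistrib Y X P z.2) := by
    filter_upwards [hsep, ae_fst_ne_snd_of_nullSingletonClass_map (measurable_pi_apply k)]
      with z hz hne
    exact hz hne
  obtain ⟨f, hf, hdirac⟩ :=
    exists_measurable_ae_eq_dirac (ae_exists_eq_dirac_of_ae_isSeparatedPair hsep')
  refine ⟨⟨f, hf, ae_eq_comp_of_condDistrib_eq_dirac hX hY hf hdirac⟩, ?_⟩
  rw [← condDistrib_comp_map hX.aemeasurable hY.aemeasurable]
  exact nullSingletonClass_comp_of_ae_isSeparatedPair hsep'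

/-- If some coordinate of `X` has continuous cdf (atomless law) and `Y` is completely
separated relative to `X`, then `Y` perfectly depends on `X` and has atomless law. -/
theorem completelySeparated_imp_perfectDependence
    {Ω : Type*} [MeasurableSpace Ω] {p : ℕ} (hp : 1 ≤ p)
    (P : Measure Ω) [IsProbabilityMeasure P]
    (X : Ω → (Fin p → ℝ)) (Y : Ω → ℝ)
    (hX : Measurable X) (hY : Measurable Y)
    (hYnd : Nondegenerate P Y)
    (k : Fin p) (hk : NoAtoms (P.map fun ω => X ω k))
    (hsep : CompletelySeparated P Y X) :
    (∃ f : (Fin p → ℝ) → ℝ, Measurable f ∧ ∀ᵐ ω ∂P, Y ω = f (X ω))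
    ∧ NoAtoms (P.map Y) :=
  completelySeparated_imp_perfectDependence_general P X Y hX hY k hk hsep
end

section
/- Suppose the cdf of Y is continuous and some coordinate X_k of X has continuous cdf (both laws atomless). Then Y is completely separated relative to X if and only if Y perfectly depends on X, i.e. if and only if there exists a Borel measurable f : ℝ^p → ℝ with Y = f(X) almost surely. -/
open MeasureTheory ProbabilityTheory Set Filter Topology

/-!
If `Y = f(X)` a.s., then `κ(x) = δ_{f x}`, and `Ψ(δ_a, δ_b) ∈ {0, 1}` whenever `a ≠ b`, which
happens almost surely because `Y` is atomless.

Conversely, the integrand of `Ψ(κ(x'), κ(x))` takes values in `[0, 1]`, so when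
`Ψ(κ(x'), κ(x)) ∈ {0, 1}` it is `κ(x)`-a.e. equal to that value, and then so is
`u ↦ κ(x')((-∞, u))`. As the diagonal is `μ_X ⊗ μ_X`-null (`X_k` is atomless), averaging over
`x' ∼ μ_X` shows that for a.e. `x` the cdf `F(u) = P(Y < u)` is `κ(x)`-a.e. equal to
`g(x) = ∫ Ψ(κ(x'), κ(x)) dμ_X(x')`, i.e. `F(Y) = g(X)` a.s. An atomless law has an a.e. strictly
increasing cdf, so its generalized inverse recovers `Y` from `F(Y)`.
-/

section NullSingletonClass

variable {α β : Type*} [MeasurableSpace α] [MeasurableSpace β]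

lemma nullSingletonClass_of_map [MeasurableSingletonClass β] {μ : Measure α} {f : α → β}
    (hf : Measurable f) (h : NullSingletonClass (μ.map f)) : NullSingletonClass μ where
  measure_singleton x := by
    have hfiber : μ (f ⁻¹' {f x}) = 0 := by
      rw [← Measure.map_apply hf (measurableSet_singleton _)]
      exact measure_singleton (f x)
    exact measure_mono_null (singleton_subset_iff.2 rfl : {x} ⊆ f ⁻¹' {f x}) hfiber

lemma ae_prod_ne_of_nullSingletonClass [MeasurableEq α] (ν μ : Measure α) [SFinite μ]
    [NullSingletonClass μ] :
    ∀ᵐ z ∂ν.prod μ, z.1 ≠ z.2 := by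
  rw [ae_iff]
  simp only [ne_eq, not_not]
  refine (Measure.measure_prod_null (measurableSet_eq_fun measurable_fst measurable_snd)).2
    (Eventually.of_forall fun x => ?_)
  exact measure_mono_null (fun y (hy : x = y) => hy.symm) (measure_singleton x)

end NullSingletonClass

lemma ae_eq_integral_of_integral_eq_zero_or_one {α : Type*} [MeasurableSpace α]
    {μ : Measure α} [IsProbabilityMeasure μ] {f : α → ℝ} (hf : AEStronglyMeasurable f μ)
    (h0 : ∀ x, 0 ≤ f x) (h1 : ∀ x, f x ≤ 1) (h : ∫ x, f x ∂μ = 0 ∨ ∫ x, f x ∂μ = 1) :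
    ∀ᵐ x ∂μ, f x = ∫ x, f x ∂μ := by
  have hint : Integrable f μ :=
    .of_bound hf 1 (Eventually.of_forall fun x => by simpa [abs_of_nonneg (h0 x)] using h1 x)
  rcases h with h | h
  · filter_upwards [(integral_eq_zero_iff_of_nonneg h0 hint).1 h] with x hx
    rw [h, hx, Pi.zero_apply]
  · have hsub : ∫ x, (1 - f x) ∂μ = 0 := by
      rw [integral_sub (integrable_const 1) hint, h, integral_const]
      simp
    filter_upwards [(integral_eq_zero_iff_of_nonneg (fun x => sub_nonneg.2 (h1 x))
      ((integrable_const 1).sub hint)).1 hsub] with x hx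
    rw [h]
    linarith [show 1 - f x = 0 from hx]

section Cdf

variable (ν : Measure ℝ)

lemma measurable_measure_Iio : Measurable fun y => ν (Iio y) :=
  Monotone.measurable fun _ _ hab => measure_mono (Iio_subset_Iio hab)

lemma measure_eq_zero_of_forall_measure_inter_Iic_eq_zero [NullSingletonClass ν] {S : Set ℝ}
    (h : ∀ y ∈ S, ν (S ∩ Iic y) = 0) : ν S = 0 := by
  have hcover : S ⊆ (⋃ q ∈ {q : ℚ | ∃ z ∈ S, (q : ℝ) ≤ z}, S ∩ Iic (q : ℝ)) ∪
      {y | y ∈ S ∧ ∀ z ∈ S, z ≤ y} := by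
    intro y hy
    by_cases hmax : ∃ z ∈ S, y < z
    · obtain ⟨z, hz, hyz⟩ := hmax
      obtain ⟨q, hyq, hqz⟩ := exists_rat_btwn hyz
      exact Or.inl (mem_biUnion ⟨z, hz, hqz.le⟩ ⟨hy, hyq.le⟩)
    · exact Or.inr ⟨hy, fun z hz => not_lt.1 fun hyz => hmax ⟨z, hz, hyz⟩⟩
  refine measure_mono_null hcover (measure_union_null ?_ ?_)
  · refine (measure_biUnion_null_iff (to_countable _)).2 fun q ⟨z, hz, hqz⟩ => ?_
    exact measure_mono_null (inter_subset_inter_right _ (Iic_subset_Iic.2 hqz)) (h z hz)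
  · exact Set.Subsingleton.measure_zero
      (fun a ha b hb => le_antisymm (hb.2 a ha.1) (ha.2 b hb.1)) ν

lemma ae_forall_lt_measure_Iio_lt [IsFiniteMeasure ν] [NullSingletonClass ν] :
    ∀ᵐ y ∂ν, ∀ z < y, ν (Iio z) < ν (Iio y) := by
  have hIco : ∀ q : ℚ, ∀ᵐ y ∂ν, (q : ℝ) < y → ν (Ico (q : ℝ) y) ≠ 0 := by
    intro q
    rw [ae_iff]
    simp only [Classical.not_imp, not_not]
    refine measure_eq_zero_of_forall_measure_inter_Iic_eq_zero ν fun y hy =>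
      measure_mono_null ?_ (measure_union_null hy.2 (measure_singleton y))
    rintro z ⟨⟨hqz, -⟩, hzy⟩
    rcases (mem_Iic.1 hzy).lt_or_eq with hzy | rfl
    exacts [Or.inl ⟨hqz.le, hzy⟩, Or.inr rfl]
  filter_upwards [ae_all_iff.2 hIco] with y hy z hzy
  obtain ⟨q, hzq, hqy⟩ := exists_rat_btwn hzy
  calc ν (Iio z) ≤ ν (Iio (q : ℝ)) := measure_mono (Iio_subset_Iio hzq.le)
    _ < ν (Iio (q : ℝ)) + ν (Ico (q : ℝ) y) :=
      ENNReal.lt_add_right (measure_ne_top _ _) (hy q hqy)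
    _ = ν (Iio y) := by
      rw [← Iio_union_Ico_eq_Iio hqy.le,
        measure_union ((Iio_disjoint_Ici le_rfl).mono_right Ico_subset_Ici_self) measurableSet_Ico]

lemma exists_measurable_ae_leftInverse_cdf [IsFiniteMeasure ν] [NullSingletonClass ν] :
    ∃ h : ℝ → ℝ, Measurable h ∧ ∀ᵐ y ∂ν, h (ν (Iio y)).toReal = y := by
  -- The generalized inverse is taken in `EReal` so that it is monotone, hence measurable.
  let Q : ℝ → EReal := fun c => sInf (Real.toEReal '' {z | c ≤ (ν (Iio z)).toReal})
  have hQ : Monotone Q := fun c c' hcc' => sInf_le_sInf (image_mono fun z hz => hcc'.trans hz)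
  refine ⟨fun c => (Q c).toReal, measurable_ereal_toReal.comp hQ.measurable, ?_⟩
  filter_upwards [ae_forall_lt_measure_Iio_lt ν] with y hy
  have hleast : IsLeast {z | (ν (Iio y)).toReal ≤ (ν (Iio z)).toReal} y :=
    ⟨le_refl (ν (Iio y)).toReal, fun z hz => not_lt.1 fun hzy =>
      hz.not_gt (ENNReal.toReal_strict_mono (measure_ne_top _ _) (hy z hzy))⟩
  simp only [Q, (EReal.coe_strictMono.monotone.map_isLeast hleast).isGLB.sInf_eq, EReal.toReal_coe]

end Cdf

noncomputable def normCdf (μ : Measure ℝ) (y : ℝ) : ℝ :=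
  (μ (Iio y)).toReal + 1 / 2 * (μ {y}).toReal

lemma relEffect_eq_integral_normCdf (μ ν : Measure ℝ) :
    relEffect μ ν = ∫ y, normCdf μ y ∂ν := rfl

lemma toReal_measure_Iio_add_toReal_measure_singleton_le_one (μ : Measure ℝ)
    [IsProbabilityMeasure μ] (y : ℝ) : (μ (Iio y)).toReal + (μ {y}).toReal ≤ 1 := by
  have hIic : μ (Iio y) + μ {y} = μ (Iic y) := by
    rw [← Iio_union_right, measure_union (by simp) (measurableSet_singleton y)]
  rw [← ENNReal.toReal_add (measure_ne_top _ _) (measure_ne_top _ _), hIic]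
  exact ENNReal.toReal_le_of_le_ofReal zero_le_one (by simpa using prob_le_one)

section Kernel

variable {E : Type*} [MeasurableSpace E]

lemma measurable_kernel_Iio (κ : Kernel E ℝ) [IsSFiniteKernel κ] :
    Measurable fun q : E × ℝ => κ q.1 (Iio q.2) :=
  Kernel.measurable_kernel_prodMk_left (κ := κ.comap Prod.fst measurable_fst)
    (measurableSet_lt measurable_snd (measurable_snd.comp measurable_fst))

lemma measurable_kernel_singleton (κ : Kernel E ℝ) [IsSFiniteKernel κ] :
    Measurable fun q : E × ℝ => κ q.1 {q.2} :=
  Kernel.measurable_kernel_prodMk_left (κ := κ.comap Prod.fst measurable_fst)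
    (measurableSet_eq_fun measurable_snd (measurable_snd.comp measurable_fst))

lemma measurable_normCdf_kernel (κ : Kernel E ℝ) [IsSFiniteKernel κ] :
    Measurable fun q : E × ℝ => normCdf (κ q.1) q.2 :=
  (measurable_kernel_Iio κ).ennreal_toReal.add
    ((measurable_kernel_singleton κ).ennreal_toReal.const_mul _)

lemma measurable_normCdf (μ : Measure ℝ) [SFinite μ] : Measurable (normCdf μ) :=
  (measurable_normCdf_kernel (Kernel.const Unit μ)).comp
    ((measurable_const (a := ())).prodMk measurable_id)

lemma measurable_relEffect_s11 (κ : Kernel E ℝ) [IsSFiniteKernel κ] :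
    Measurable fun q : E × E => relEffect (κ q.1) (κ q.2) :=
  (((measurable_normCdf_kernel κ).comp ((measurable_fst.comp measurable_fst).prodMk
    measurable_snd)).stronglyMeasurable.integral_kernel_prod_right'
      (κ := κ.comap Prod.snd measurable_snd)).measurable

lemma relEffect_dirac_dirac_of_ne {a b : ℝ} (hab : a ≠ b) :
    relEffect (Measure.dirac a) (Measure.dirac b) = 0 ∨
      relEffect (Measure.dirac a) (Measure.dirac b) = 1 := by
  rw [relEffect_eq_integral_normCdf, integral_dirac, normCdf,
    Measure.dirac_apply' _ (measurableSet_singleton b),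
    Measure.dirac_apply' _ measurableSet_Iio]
  rcases hab.lt_or_gt with h | h
  · simp [h, hab]
  · simp [h.not_gt, hab]

lemma ae_toReal_measure_Iio_eq_relEffect (μ ν : Measure ℝ) [IsProbabilityMeasure μ]
    [IsProbabilityMeasure ν] (h : relEffect μ ν = 0 ∨ relEffect μ ν = 1) :
    ∀ᵐ u ∂ν, (μ (Iio u)).toReal = relEffect μ ν := by
  have hle := toReal_measure_Iio_add_toReal_measure_singleton_le_one μ
  have hnormCdf := ae_eq_integral_of_integral_eq_zero_or_one
    (measurable_normCdf μ).aestronglyMeasurable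
    (fun u => by unfold normCdf; positivity)
    (fun u => by unfold normCdf; linarith [hle u, (μ {u}).toReal_nonneg]) h
  filter_upwards [hnormCdf] with u hu
  rw [← relEffect_eq_integral_normCdf, normCdf] at hu
  rcases h with h | h <;> rw [h] at hu ⊢ <;>
    linarith [hle u, (μ {u}).toReal_nonneg, (μ (Iio u)).toReal_nonneg]

lemma ae_toReal_comp_Iio_eq_integral_relEffect (κ : Kernel E ℝ) [IsMarkovKernel κ]
    (μ : Measure E) [IsProbabilityMeasure μ] {x : E}
    (hx : ∀ᵐ x' ∂μ, relEffect (κ x') (κ x) = 0 ∨ relEffect (κ x') (κ x) = 1) :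
    ∀ᵐ u ∂κ x, ((κ ∘ₘ μ) (Iio u)).toReal = ∫ x', relEffect (κ x') (κ x) ∂μ := by
  have hmeas : MeasurableSet {q : E × ℝ | (κ q.1 (Iio q.2)).toReal = relEffect (κ q.1) (κ x)} :=
    measurableSet_eq_fun (measurable_kernel_Iio κ).ennreal_toReal
      ((measurable_relEffect_s11 κ).comp (measurable_fst.prodMk measurable_const))
  have hswap := (Measure.ae_ae_comm hmeas).1
    (hx.mono fun x' => ae_toReal_measure_Iio_eq_relEffect (κ x') (κ x))
  filter_upwards [hswap] with u hu
  rw [Measure.bind_apply measurableSet_Iio κ.aemeasurable,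
    ← integral_toReal (κ.measurable_coe measurableSet_Iio).aemeasurable
      (Eventually.of_forall fun _ => measure_lt_top _ _)]
  exact integral_congr_ae hu

lemma CompletelySeparated.exists_measurable_ae_eq_comp [MeasurableEq E] {Ω : Type*}
    [MeasurableSpace Ω] {P : Measure Ω} [IsProbabilityMeasure P] {X : Ω → E} {Y : Ω → ℝ}
    (hX : Measurable X) (hY : Measurable Y) [NullSingletonClass (P.map X)]
    [NullSingletonClass (P.map Y)] (h : CompletelySeparated P Y X) :
    ∃ f : E → ℝ, Measurable f ∧ ∀ᵐ ω ∂P, Y ω = f (X ω) := by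
  set μ := P.map X
  have : IsProbabilityMeasure μ := Measure.isProbabilityMeasure_map hX.aemeasurable
  set κ := condDistrib Y X P
  have hsep : ∀ᵐ x ∂μ, ∀ᵐ x' ∂μ, relEffect (κ x') (κ x) = 0 ∨ relEffect (κ x') (κ x) = 1 := by
    have hoff : ∀ᵐ z ∂μ.prod μ,
        relEffect (κ z.1) (κ z.2) = 0 ∨ relEffect (κ z.1) (κ z.2) = 1 := by
      filter_upwards [h, ae_prod_ne_of_nullSingletonClass μ μ] with z hz hne using hz hne
    exact Measure.ae_ae_of_ae_prod (Measure.measurePreserving_swap.quasiMeasurePreserving.ae hoff)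
  let g : E → ℝ := fun x => ∫ x', relEffect (κ x') (κ x) ∂μ
  have hg : Measurable g :=
    (measurable_relEffect_s11 κ).stronglyMeasurable.integral_prod_left'.measurable
  have hcdf : ∀ᵐ ω ∂P, ((κ ∘ₘ μ) (Iio (Y ω))).toReal = g (X ω) := by
    have hmeas : MeasurableSet {q : E × ℝ | ((κ ∘ₘ μ) (Iio q.2)).toReal = g q.1} :=
      measurableSet_eq_fun ((measurable_measure_Iio _).ennreal_toReal.comp measurable_snd)
        (hg.comp measurable_fst)
    have hjoint := (Measure.ae_compProd_iff hmeas).2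
      (hsep.mono fun x => ae_toReal_comp_Iio_eq_integral_relEffect κ μ)
    rw [compProd_map_condDistrib hY.aemeasurable] at hjoint
    exact ae_of_ae_map (hX.prodMk hY).aemeasurable hjoint
  rw [condDistrib_comp_map hX.aemeasurable hY.aemeasurable] at hcdf
  obtain ⟨quantile, hquantile, hquantile_cdf⟩ := exists_measurable_ae_leftInverse_cdf (P.map Y)
  refine ⟨quantile ∘ g, hquantile.comp hg, ?_⟩
  filter_upwards [hcdf, ae_of_ae_map hY.aemeasurable hquantile_cdf] with ω hω hω'
  rw [Function.comp_apply, ← hω, hω']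

lemma completelySeparated_of_ae_eq_comp {Ω : Type*} [MeasurableSpace Ω] {P : Measure Ω}
    [IsFiniteMeasure P] {X : Ω → E} {Y : Ω → ℝ} (hX : Measurable X)
    [NullSingletonClass (P.map Y)] {f : E → ℝ} (hf : Measurable f)
    (hfY : ∀ᵐ ω ∂P, Y ω = f (X ω)) : CompletelySeparated P Y X := by
  have hκ : condDistrib Y X P =ᵐ[P.map X] Kernel.deterministic f hf := by
    rw [condDistrib_congr (Y' := f ∘ X) hfY (by rfl)]
    exact condDistrib_comp_self X hf
  have hne : ∀ᵐ z ∂(P.map X).prod (P.map X), f z.1 ≠ f z.2 := by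
    have hlaw : (P.map X).map f = P.map Y := by
      rw [Measure.map_map hf hX]
      exact Measure.map_congr (hfY.mono fun ω hω => hω.symm)
    have : NullSingletonClass ((P.map X).map f) := hlaw ▸ inferInstance
    have hprod := ae_prod_ne_of_nullSingletonClass ((P.map X).map f) ((P.map X).map f)
    rw [Measure.map_prod_map _ _ hf hf] at hprod
    exact ae_of_ae_map (hf.prodMap hf).aemeasurable hprod
  filter_upwards [Measure.quasiMeasurePreserving_fst.ae hκ,
    Measure.quasiMeasurePreserving_snd.ae hκ, hne] with z h₁ h₂ hz _
  rw [h₁, h₂, Kernel.deterministic_apply, Kernel.deterministic_apply]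
  exact relEffect_dirac_dirac_of_ne hz

end Kernel

theorem completelySeparated_iff_perfectDependence_general
    {Ω : Type*} [MeasurableSpace Ω] {p : ℕ}
    (P : Measure Ω) [IsProbabilityMeasure P]
    (X : Ω → (Fin p → ℝ)) (Y : Ω → ℝ)
    (hX : Measurable X) (hY : Measurable Y)
    (hYc : NoAtoms (P.map Y))
    (k : Fin p) (hk : NoAtoms (P.map fun ω => X ω k)) :
    CompletelySeparated P Y X
      ↔ ∃ f : (Fin p → ℝ) → ℝ, Measurable f ∧ ∀ᵐ ω ∂P, Y ω = f (X ω) := by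
  have : NullSingletonClass (P.map Y) := hYc
  have : NullSingletonClass (P.map X) := by
    refine nullSingletonClass_of_map (measurable_pi_apply k) ?_
    rwa [Measure.map_map (measurable_pi_apply k) hX]
  exact ⟨fun h => h.exists_measurable_ae_eq_comp hX hY,
    fun ⟨f, hf, hfY⟩ => completelySeparated_of_ae_eq_comp hX hf hfY⟩

/-- If `Y` and some coordinate of `X` have continuous cdfs (atomless laws), then `Y` is
completely separated relative to `X` iff `Y` perfectly depends on `X`. -/
theorem completelySeparated_iff_perfectDependence
    {Ω : Type*} [MeasurableSpace Ω] {p : ℕ} (hp : 1 ≤ p)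
    (P : Measure Ω) [IsProbabilityMeasure P]
    (X : Ω → (Fin p → ℝ)) (Y : Ω → ℝ)
    (hX : Measurable X) (hY : Measurable Y)
    (hYnd : Nondegenerate P Y)
    (hYc : NoAtoms (P.map Y))
    (k : Fin p) (hk : NoAtoms (P.map fun ω => X ω k)) :
    CompletelySeparated P Y X
      ↔ ∃ f : (Fin p → ℝ) → ℝ, Measurable f ∧ ∀ᵐ ω ∂P, Y ω = f (X ω) :=
  completelySeparated_iff_perfectDependence_general P X Y hX hY hYc k hk
end

section
/- Let X = (X₁,…,X_p) be a random vector and (X_n = (X_{1,n},…,X_{p,n}))_{n∈ℕ} a sequence of random vectors in ℝ^p. If there is some k ∈ {1,…,p} such that (i) F_{X_k} is continuous, and (ii) F_{X_{k,n}}(F_{X_{k,n}}⁻¹(t)) → t = F_{X_k}(F_{X_k}⁻¹(t)) for Lebesgue-almost all t ∈ (0, 1), then α(X_n) → α(X) as n → ∞ (and α(X) = 1). -/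
/-! A law `ν` on `ℝ` with cdf `F` and an atom `a` has `F⁻¹ = a` on the jump interval
`(F(a-), F(a))`, whose length is `ν {a}`, so `∫ (F (F⁻¹ t) - t) dt` over that interval is
`ν {a}² / 2`. The jump intervals are disjoint, hence
`P(Z = Z*) = ∑ₐ ν {a}² ≤ 2 ∫₀¹ (F (F⁻¹ t) - t)⁺ dt`, and a random vector has at most the
coincidence probability of any of its coordinates. Under (ii) the right-hand side tends to `0` by
dominated convergence, and a continuous `F_{X_k}` leaves `X_k`, hence `X`, without atoms. -/

open MeasureTheory ProbabilityTheory Set Filter Topology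

/-- The cdf of a law on `ℝ`: `F(w) = μ(-∞, w]`. -/
noncomputable def mcdf (μ : Measure ℝ) (w : ℝ) : ℝ := (μ (Set.Iic w)).toReal

/-- The pseudo-inverse (quantile function) of the cdf: `F⁻¹(t) = inf { w : F(w) ≥ t }`. -/
noncomputable def mquantile (μ : Measure ℝ) (t : ℝ) : ℝ := sInf {w : ℝ | t ≤ mcdf μ w}

open scoped ENNReal

section Coincidence

variable {E : Type*} [MeasurableSpace E]

/-- `P(Z = Z*)` for independent `Z, Z*` with law `μ`. -/
noncomputable def coincidenceProb (μ : Measure E) : ℝ≥0∞ := ∫⁻ x, μ {x} ∂μ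

theorem measurable_measure_singleton [MeasurableEq E] (μ : Measure E) [SFinite μ] :
    Measurable fun x => μ {x} := by
  have hslice : ∀ x : E, Prod.mk x ⁻¹' diagonal E = {x} := fun x => by ext; simp [eq_comm]
  simpa only [hslice] using
    measurable_measure_prodMk_left (ν := μ) (measurableSet_diagonal (α := E))

theorem alphaCoeff_eq_one_sub_coincidenceProb [MeasurableEq E] (μ : Measure E)
    [IsFiniteMeasure μ] : alphaCoeff μ = 1 - (coincidenceProb μ).toReal := by
  rw [alphaCoeff, coincidenceProb, integral_toReal (measurable_measure_singleton μ).aemeasurable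
    (ae_of_all _ fun x => measure_lt_top μ {x})]

theorem coincidenceProb_le_map {F : Type*} [MeasurableSpace F] [MeasurableEq F] (μ : Measure E)
    [SFinite μ] {f : E → F} (hf : Measurable f) :
    coincidenceProb μ ≤ coincidenceProb (μ.map f) := by
  have hsingleton : ∀ x, μ {x} ≤ μ.map f {f x} := fun x => by
    rw [Measure.map_apply hf (measurableSet_singleton _)]
    exact measure_mono fun y hy => by simp_all
  calc coincidenceProb μ ≤ ∫⁻ x, μ.map f {f x} ∂μ := lintegral_mono hsingleton
    _ = coincidenceProb (μ.map f) := (lintegral_map (measurable_measure_singleton _) hf).symm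

theorem coincidenceProb_eq_zero (μ : Measure E) [NullSingletonClass μ] :
    coincidenceProb μ = 0 := by
  simp [coincidenceProb]

end Coincidence

theorem two_mul_lintegral_Ioo_ofReal_sub {c d : ℝ} (h : c ≤ d) :
    2 * ∫⁻ t in Ioo c d, ENNReal.ofReal (d - t) = ENNReal.ofReal (d - c) ^ 2 := by
  have htriangle : ∫ t in c..d, (d - t) = (d - c) ^ 2 / 2 := by
    simpa using intervalIntegral.integral_comp_sub_left (fun x : ℝ => x) (a := c) (b := d) d
  rw [Measure.restrict_congr_set Ioo_ae_eq_Ioc, ← ofReal_integral_eq_lintegral_ofReal,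
    ← intervalIntegral.integral_of_le h, htriangle, ← ENNReal.ofReal_pow (sub_nonneg.2 h),
    ← ENNReal.ofReal_ofNat 2, ← ENNReal.ofReal_mul zero_le_two]
  · ring_nf
  · exact (continuous_const.sub continuous_id).integrableOn_Ioc
  · filter_upwards [ae_restrict_mem measurableSet_Ioc] with t ht
    exact sub_nonneg.2 ht.2

theorem Monotone.pairwise_disjoint_Ioo_leftLim {α β : Type*} [LinearOrder α] [TopologicalSpace α]
    [ConditionallyCompleteLinearOrder β] [TopologicalSpace β] [OrderTopology β] {f : α → β}
    (hf : Monotone f) :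
    Pairwise (Function.onFun Disjoint fun a => Ioo (Function.leftLim f a) (f a)) :=
  (pairwise_disjoint_on _).2 fun _ _ hab => (Iio_disjoint_Ici (hf.le_leftLim hab)).mono
    Ioo_subset_Iio_self (Ioo_subset_Ioi_self.trans Ioi_subset_Ici_self)

section Quantile

variable (ν : Measure ℝ)

theorem Ioo_leftLim_cdf_subset (a : ℝ) :
    Ioo (Function.leftLim (cdf ν) a) (cdf ν a) ⊆ Ioo 0 1 :=
  Ioo_subset_Ioo ((cdf ν).mono.le_leftLim (sub_one_lt a) |>.trans' (cdf_nonneg ν _))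
    (cdf_le_one ν a)

variable [IsProbabilityMeasure ν]

theorem mcdf_eq_cdf : mcdf ν = cdf ν := funext fun w => by
  rw [cdf_eq_real, measureReal_def, mcdf]

theorem measure_singleton_eq_ofReal_cdf_sub_leftLim (a : ℝ) :
    ν {a} = ENNReal.ofReal (cdf ν a - Function.leftLim (cdf ν) a) := by
  rw [← (cdf ν).measure_singleton, measure_cdf]

theorem nullSingletonClass_of_continuous_mcdf (h : Continuous (mcdf ν)) : NullSingletonClass ν := by
  refine ⟨fun a => ?_⟩
  rw [mcdf_eq_cdf] at h
  rw [measure_singleton_eq_ofReal_cdf_sub_leftLim,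
    ((cdf ν).mono.continuousWithinAt_Iio_iff_leftLim_eq).1 h.continuousWithinAt, sub_self,
    ENNReal.ofReal_zero]

theorem bddBelow_setOf_le_mcdf {t : ℝ} (ht : 0 < t) : BddBelow {w | t ≤ mcdf ν w} := by
  obtain ⟨w₀, hw₀⟩ := eventually_atBot.1 ((tendsto_cdf_atBot ν).eventually (eventually_lt_nhds ht))
  exact ⟨w₀, fun w hw => le_of_not_gt fun hlt =>
    (hw₀ w hlt.le).not_ge (by rw [← mcdf_eq_cdf]; exact hw)⟩

theorem nonempty_setOf_le_mcdf {t : ℝ} (ht : t < 1) : {w | t ≤ mcdf ν w}.Nonempty := by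
  obtain ⟨w, hw⟩ := ((tendsto_cdf_atTop ν).eventually (eventually_gt_nhds ht)).exists
  exact ⟨w, by rw [mem_ofPred_eq, mcdf_eq_cdf]; exact hw.le⟩

theorem monotoneOn_mcdf_mquantile : MonotoneOn (fun t => mcdf ν (mquantile ν t)) (Ioo 0 1) := by
  intro s hs t ht hst
  rw [mcdf_eq_cdf]
  exact (cdf ν).mono (csInf_le_csInf (bddBelow_setOf_le_mcdf ν hs.1)
    (nonempty_setOf_le_mcdf ν ht.2) fun w hw => hst.trans hw)

theorem mquantile_eq_of_mem_Ioo {a t : ℝ} (ht : t ∈ Ioo (Function.leftLim (cdf ν) a) (cdf ν a)) :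
    mquantile ν t = a := by
  refine IsLeast.csInf_eq ⟨?_, fun w hw => le_of_not_gt fun hlt => ?_⟩
  · simpa [mcdf_eq_cdf] using ht.2.le
  · exact ((cdf ν).mono.le_leftLim hlt).not_gt
      (ht.1.trans_le (by rw [← mcdf_eq_cdf]; exact hw))

theorem two_mul_lintegral_Ioo_leftLim_cdf_mcdf_mquantile_sub (a : ℝ) :
    2 * ∫⁻ t in Ioo (Function.leftLim (cdf ν) a) (cdf ν a),
        ENNReal.ofReal (mcdf ν (mquantile ν t) - t) = ν {a} ^ 2 := by
  rw [setLIntegral_congr_fun measurableSet_Ioo fun t ht => by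
      rw [mquantile_eq_of_mem_Ioo ν ht, mcdf_eq_cdf],
    two_mul_lintegral_Ioo_ofReal_sub ((cdf ν).mono.leftLim_le le_rfl),
    measure_singleton_eq_ofReal_cdf_sub_leftLim]

theorem coincidenceProb_le_two_mul_lintegral_mcdf_mquantile_sub :
    coincidenceProb ν ≤ 2 * ∫⁻ t in Ioo 0 1, ENNReal.ofReal (mcdf ν (mquantile ν t) - t) := by
  set atoms := Function.support fun a => ν {a}
  have hatoms : atoms.Countable :=
    (Measure.countable_meas_pos_of_disjoint_iUnion (μ := ν) (fun a => measurableSet_singleton a)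
      fun a b hab => disjoint_singleton.2 hab).mono fun a ha => pos_iff_ne_zero.2 ha
  have : Countable atoms := hatoms.to_subtype
  set I : atoms → Set ℝ := fun a => Ioo (Function.leftLim (cdf ν) a) (cdf ν a)
  calc coincidenceProb ν = ∑' a : atoms, ν {(a : ℝ)} ^ 2 := by
        rw [coincidenceProb, ← setLIntegral_eq_of_support_subset subset_rfl,
          lintegral_countable _ hatoms]
        simp only [sq]
    _ = 2 * ∑' a : atoms, ∫⁻ t in I a, ENNReal.ofReal (mcdf ν (mquantile ν t) - t) := by
        rw [← ENNReal.tsum_mul_left]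
        exact tsum_congr fun a => (two_mul_lintegral_Ioo_leftLim_cdf_mcdf_mquantile_sub ν a).symm
    _ = 2 * ∫⁻ t in ⋃ a, I a, ENNReal.ofReal (mcdf ν (mquantile ν t) - t) := by
        rw [lintegral_iUnion (s := I) (fun _ => measurableSet_Ioo)
          fun a b hab => (cdf ν).mono.pairwise_disjoint_Ioo_leftLim (Subtype.coe_ne_coe.2 hab)]
    _ ≤ 2 * ∫⁻ t in Ioo 0 1, ENNReal.ofReal (mcdf ν (mquantile ν t) - t) := by
        gcongr
        exact iUnion_subset fun a => Ioo_leftLim_cdf_subset ν a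

end Quantile

theorem coincidenceProb_le_two_mul_lintegral_mcdf_map_mquantile_sub {E : Type*} [MeasurableSpace E]
    [MeasurableEq E] (μ : Measure E) [IsProbabilityMeasure μ] {f : E → ℝ} (hf : Measurable f) :
    coincidenceProb μ ≤
      2 * ∫⁻ t in Ioo 0 1, ENNReal.ofReal (mcdf (μ.map f) (mquantile (μ.map f) t) - t) := by
  have := Measure.isProbabilityMeasure_map (μ := μ) hf.aemeasurable
  exact (coincidenceProb_le_map μ hf).trans
    (coincidenceProb_le_two_mul_lintegral_mcdf_mquantile_sub _)

theorem tendsto_lintegral_mcdf_mquantile_sub (ν : ℕ → Measure ℝ) [∀ n, IsProbabilityMeasure (ν n)]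
    (h : ∀ᵐ t ∂(volume.restrict (Ioo (0 : ℝ) 1)),
      Tendsto (fun n => mcdf (ν n) (mquantile (ν n) t)) atTop (𝓝 t)) :
    Tendsto (fun n => ∫⁻ t in Ioo 0 1, ENNReal.ofReal (mcdf (ν n) (mquantile (ν n) t) - t))
      atTop (𝓝 0) := by
  have hmeas (n : ℕ) : AEMeasurable (fun t => ENNReal.ofReal (mcdf (ν n) (mquantile (ν n) t) - t))
      (volume.restrict (Ioo 0 1)) :=
    ENNReal.measurable_ofReal.comp_aemeasurable <| (aemeasurable_restrict_of_monotoneOn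
      measurableSet_Ioo (monotoneOn_mcdf_mquantile (ν n))).sub aemeasurable_id
  have hbound (n : ℕ) : (fun t => ENNReal.ofReal (mcdf (ν n) (mquantile (ν n) t) - t))
      ≤ᵐ[volume.restrict (Ioo 0 1)] fun _ => 1 := by
    filter_upwards [ae_restrict_mem measurableSet_Ioo] with t ht
    rw [ENNReal.ofReal_le_one, mcdf_eq_cdf]
    linarith [cdf_le_one (ν n) (mquantile (ν n) t), ht.1]
  have hlim : ∀ᵐ t ∂(volume.restrict (Ioo (0 : ℝ) 1)),
      Tendsto (fun n => ENNReal.ofReal (mcdf (ν n) (mquantile (ν n) t) - t)) atTop (𝓝 0) := by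
    filter_upwards [h] with t ht
    simpa using ENNReal.tendsto_ofReal (ht.sub_const t)
  simpa using tendsto_lintegral_of_dominated_convergence' _ hmeas hbound (by simp) hlim

theorem alphaCoeff_tendsto_of_continuous_coordinate_general
    {p : ℕ}
    (μ : Measure (Fin p → ℝ)) [IsProbabilityMeasure μ]
    (μn : ℕ → Measure (Fin p → ℝ)) [∀ n, IsProbabilityMeasure (μn n)]
    (k : Fin p)
    (hcont : Continuous (mcdf (μ.map fun x => x k)))
    (hquant : ∀ᵐ t ∂(volume.restrict (Set.Ioo (0 : ℝ) 1)),
      Tendsto (fun n => mcdf ((μn n).map fun x => x k)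
          (mquantile ((μn n).map fun x => x k) t)) atTop (𝓝 t)) :
    Tendsto (fun n => alphaCoeff (μn n)) atTop (𝓝 (alphaCoeff μ))
    ∧ alphaCoeff μ = 1 := by
  have hk : Measurable fun x : Fin p → ℝ => x k := measurable_pi_apply k
  have := Measure.isProbabilityMeasure_map (μ := μ) hk.aemeasurable
  have (n : ℕ) := Measure.isProbabilityMeasure_map (μ := μn n) hk.aemeasurable
  have := nullSingletonClass_of_continuous_mcdf _ hcont
  have hμ : coincidenceProb μ = 0 :=
    nonpos_iff_eq_zero.1 ((coincidenceProb_le_map μ hk).trans_eq (coincidenceProb_eq_zero _))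
  have hgap := ENNReal.Tendsto.const_mul (a := 2) (tendsto_lintegral_mcdf_mquantile_sub _ hquant)
    (.inr ENNReal.ofNat_ne_top)
  rw [mul_zero] at hgap
  have hμn : Tendsto (fun n => coincidenceProb (μn n)) atTop (𝓝 0) :=
    tendsto_of_tendsto_of_tendsto_of_le_of_le tendsto_const_nhds hgap (fun _ => bot_le)
      fun n => coincidenceProb_le_two_mul_lintegral_mcdf_map_mquantile_sub _ hk
  have hα : alphaCoeff μ = 1 := by simp [alphaCoeff_eq_one_sub_coincidenceProb, hμ]
  refine ⟨?_, hα⟩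
  rw [hα]
  simp only [alphaCoeff_eq_one_sub_coincidenceProb]
  simpa using ((ENNReal.tendsto_toReal ENNReal.zero_ne_top).comp hμn).const_sub 1

/-- Convergence of the normalizing constant `α` when some fixed coordinate of the limit has a
continuous cdf and the quantile transform condition holds for that coordinate. -/
theorem alphaCoeff_tendsto_of_continuous_coordinate
    {p : ℕ} (hp : 1 ≤ p)
    (μ : Measure (Fin p → ℝ)) [IsProbabilityMeasure μ]
    (μn : ℕ → Measure (Fin p → ℝ)) [∀ n, IsProbabilityMeasure (μn n)]
    (k : Fin p)
    (hcont : Continuous (mcdf (μ.map fun x => x k)))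
    (hquant : ∀ᵐ t ∂(volume.restrict (Set.Ioo (0 : ℝ) 1)),
      Tendsto (fun n => mcdf ((μn n).map fun x => x k)
          (mquantile ((μn n).map fun x => x k) t)) atTop (𝓝 t)) :
    Tendsto (fun n => alphaCoeff (μn n)) atTop (𝓝 (alphaCoeff μ))
    ∧ alphaCoeff μ = 1 :=
  alphaCoeff_tendsto_of_continuous_coordinate_general μ μn k hcont hquant
end
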